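/- arXiv:2210.08070 — 3 statements merged into one kernel-verified Lean document; each statement's English description precedes it below -/
import Mathlib

section
/- The logic C_ω is paraconsistent: for distinct propositional variables p and q, the formula q is not derivable from the set {p, ¬p} in C_ω; equivalently, (¬p ∧ p) → q is not a theorem of C_ω. -/
universe u

/-- Propositional formulas over the signature `{∧, ∨, →, ¬}` with countably
many propositional variables. -/
inductive Fm : Type where
  | var (p : Nat) : Fm
  | and (a b : Fm) : Fm
  | or (a b : Fm) : Fm
  | imp (a b : Fm) : Fm
  | neg (a : Fm) : Fm

/-- Derivability `Γ ⊢ α` in da Costa's logic `C_ω`: the Hilbert calculus with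
axiom schemas (A1)–(A10) and modus ponens as its only inference rule. -/
inductive Deriv (Γ : Set Fm) : Fm → Prop where
  | hyp {a : Fm} : a ∈ Γ → Deriv Γ a
  | a1 (a b : Fm) : Deriv Γ (a.imp (b.imp a))
  | a2 (a b c : Fm) : Deriv Γ ((a.imp (b.imp c)).imp ((a.imp b).imp (a.imp c)))
  | a3 (a b : Fm) : Deriv Γ ((a.and b).imp a)
  | a4 (a b : Fm) : Deriv Γ ((a.and b).imp b)
  | a5 (a b : Fm) : Deriv Γ (a.imp (b.imp (a.and b)))
  | a6 (a b : Fm) : Deriv Γ (a.imp (a.or b))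
  | a7 (a b : Fm) : Deriv Γ (b.imp (a.or b))
  | a8 (a b c : Fm) : Deriv Γ ((a.imp c).imp ((b.imp c).imp ((a.or b).imp c)))
  | a9 (a : Fm) : Deriv Γ (a.or a.neg)
  | a10 (a : Fm) : Deriv Γ (a.neg.neg.imp a)
  | mp {a b : Fm} : Deriv Γ (a.imp b) → Deriv Γ a → Deriv Γ b

deriving instance DecidableEq for Fm

/-- A non-truth-functional valuation: classical on `∧,∨,→`, and `¬a` is true
iff `a` is false or `a` is the variable `p` (so both `p` and `¬p` are true). -/
def cval (p : Nat) : Fm → Bool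
  | .var r => r = p
  | .and a b => cval p a && cval p b
  | .or a b => cval p a || cval p b
  | .imp a b => !cval p a || cval p b
  | .neg a => !cval p a || decide (a = Fm.var p)

lemma cval_sound {p : Nat} {Γ : Set Fm} {a : Fm} (hd : Deriv Γ a)
    (hΓ : ∀ g ∈ Γ, cval p g = true) : cval p a = true := by
  induction hd with
  | hyp h => exact hΓ _ h
  | mp _ _ ih1 ih2 =>
      simp only [cval] at ih1
      rcases Bool.or_eq_true_iff.mp ih1 with h | h
      · simp [ih2] at h
      · exact h
  | a9 a => by_cases h : cval p a = true <;> simp [cval, h]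
  | a10 a =>
      by_cases h : cval p a = true <;>
        by_cases h2 : a = Fm.var p <;> simp [cval, h, h2]
  | a2 a b c => cases ha : cval p a <;> cases hb : cval p b <;>
      cases hc : cval p c <;> simp [cval, ha, hb, hc]
  | a8 a b c => cases ha : cval p a <;> cases hb : cval p b <;>
      cases hc : cval p c <;> simp [cval, ha, hb, hc]
  | _ => (rename_i a b; cases ha : cval p a <;> cases hb : cval p b <;>
      simp [cval, ha, hb])

/-- The logic `C_ω` is paraconsistent: for distinct propositional variables `p`
and `q`, the formula `q` is not derivable from `{p, ¬p}`; equivalently,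
`(¬p ∧ p) → q` is not a theorem of `C_ω`. -/
theorem comega_paraconsistent (p q : Nat) (h : p ≠ q) :
    ¬ Deriv {Fm.var p, (Fm.var p).neg} (Fm.var q) ∧
      ¬ Deriv ∅ (((Fm.var p).neg.and (Fm.var p)).imp (Fm.var q)) := by
  constructor
  · intro hd
    have := cval_sound (p := p) hd (by
      rintro g (rfl | rfl) <;> simp [cval])
    simp [cval, Ne.symm h] at this
  · intro hd
    have := cval_sound (p := p) hd (by rintro g ⟨⟩)
    simp [cval, Ne.symm h] at this
end

section
/- Adequacy theorem for C_ω with respect to Fidel semantics: for every set of formulas Γ ∪ {α} of C_ω, Γ ⊢ α in C_ω if and only if Γ ⊨ α, i.e. for every C_ω-structure ⟨A, N⟩ and every C_ω-valuation v on it such that v(β) = 1 for all β ∈ Γ, one has v(α) = 1. -/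
/-!
Soundness is an induction on derivations: the positive axioms evaluate to `⊤` in every generalized
Heyting algebra, (A9) because `x ⊔ y = ⊤` for `y ∈ N x`, (A10) because `v (¬¬α) ≤ v α`, and modus
ponens preserves `⊤`. For completeness, interderivability from `Γ` is a congruence for `∧`, `∨`, `→`, and the
quotient, the Lindenbaum algebra, is a generalized Heyting algebra in which `[α] = ⊤` exactly when
`Γ ⊢ α`. Choosing `N [α] = {[¬β] | [β] = [α]}` makes `α ↦ [α]` a `C_ω`-valuation; the choice of
representative is needed because `¬` is not a congruence of `C_ω`.
-/

universe u

structure FidelStr (A : Type u) [GeneralizedHeytingAlgebra A] where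
  N : A → Set A
  nonempty : ∀ x : A, (N x).Nonempty
  sup_eq_top : ∀ x : A, ∀ y ∈ N x, x ⊔ y = ⊤
  dneg : ∀ x : A, ∀ y ∈ N x, ∃ z ∈ N y, z ≤ x

def IsVal {A : Type u} [GeneralizedHeytingAlgebra A] (F : FidelStr A) (v : Fm → A) : Prop :=
  (∀ a b : Fm, v (a.and b) = v a ⊓ v b) ∧
    (∀ a b : Fm, v (a.or b) = v a ⊔ v b) ∧
    (∀ a b : Fm, v (a.imp b) = v a ⇨ v b) ∧
    (∀ a : Fm, v a.neg ∈ F.N (v a)) ∧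
    (∀ a : Fm, v a.neg.neg ≤ v a)

namespace ULift

variable {α : Type*}

instance [HImp α] : HImp (ULift.{v} α) where himp x y := up (x.down ⇨ y.down)

instance [GeneralizedHeytingAlgebra α] : GeneralizedHeytingAlgebra (ULift.{v} α) :=
  down_injective.generalizedHeytingAlgebra _ Iff.rfl Iff.rfl (fun _ _ => rfl) (fun _ _ => rfl) rfl
    (fun _ _ => rfl)

end ULift

section Semantics

variable {A : Type u} [GeneralizedHeytingAlgebra A]

theorem IsVal.eq_top_of_deriv {F : FidelStr A} {v : Fm → A} (hv : IsVal F v) {Γ : Set Fm}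
    (hΓ : ∀ β ∈ Γ, v β = ⊤) {a : Fm} (h : Deriv Γ a) : v a = ⊤ := by
  obtain ⟨hand, hor, himp, hneg, hdn⟩ := hv
  have himp_eq_top : ∀ a b, v (a.imp b) = ⊤ ↔ v a ≤ v b := fun a b => by
    rw [himp, himp_eq_top_iff]
  induction h with
  | hyp h => exact hΓ _ h
  | a1 a b => rw [himp_eq_top, himp]; exact le_himp
  | a2 a b c =>
    rw [himp_eq_top]; simp only [himp]
    rw [himp_himp, himp_himp, himp_inf_self, inf_comm]
  | a3 a b => rw [himp_eq_top, hand]; exact inf_le_left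
  | a4 a b => rw [himp_eq_top, hand]; exact inf_le_right
  | a5 a b => rw [himp_eq_top, himp, hand, le_himp_iff]
  | a6 a b => rw [himp_eq_top, hor]; exact le_sup_left
  | a7 a b => rw [himp_eq_top, hor]; exact le_sup_right
  | a8 a b c =>
    rw [himp_eq_top]; simp only [himp, hor]
    rw [sup_himp_distrib, le_himp_iff]
  | a9 a => rw [hor]; exact F.sup_eq_top _ _ (hneg a)
  | a10 a => exact (himp_eq_top _ _).2 (hdn a)
  | mp _ _ ihab iha => exact top_le_iff.1 (iha ▸ (himp_eq_top _ _).1 ihab)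

def FidelStr.ofSurjective (v : Fm → A) (hsurj : Function.Surjective v)
    (hem : ∀ a, v a ⊔ v a.neg = ⊤) (hdn : ∀ a, v a.neg.neg ≤ v a) : FidelStr A where
  N x := (fun b => v b.neg) '' (v ⁻¹' {x})
  nonempty x := Set.Nonempty.image _ (hsurj x)
  sup_eq_top := by
    rintro _ _ ⟨b, rfl, rfl⟩
    exact hem b
  dneg := by
    rintro _ _ ⟨b, rfl, rfl⟩
    exact ⟨_, ⟨b.neg, rfl, rfl⟩, hdn b⟩

theorem isVal_ofSurjective {v : Fm → A} (hsurj : Function.Surjective v)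
    (hem : ∀ a, v a ⊔ v a.neg = ⊤) (hdn : ∀ a, v a.neg.neg ≤ v a)
    (hand : ∀ a b, v (a.and b) = v a ⊓ v b) (hor : ∀ a b, v (a.or b) = v a ⊔ v b)
    (himp : ∀ a b, v (a.imp b) = v a ⇨ v b) :
    IsVal (FidelStr.ofSurjective v hsurj hem hdn) v :=
  ⟨hand, hor, himp, fun a => ⟨a, rfl, rfl⟩, hdn⟩

end Semantics

namespace Deriv

variable {Γ Δ : Set Fm} {a a' b b' c : Fm}

theorem mono (hΓΔ : Γ ⊆ Δ) (h : Deriv Γ a) : Deriv Δ a := by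
  induction h with
  | hyp h => exact hyp (hΓΔ h)
  | a1 => exact a1 ..
  | a2 => exact a2 ..
  | a3 => exact a3 ..
  | a4 => exact a4 ..
  | a5 => exact a5 ..
  | a6 => exact a6 ..
  | a7 => exact a7 ..
  | a8 => exact a8 ..
  | a9 => exact a9 ..
  | a10 => exact a10 ..
  | mp _ _ ihab iha => exact mp ihab iha

theorem imp_of (h : Deriv Γ b) : Deriv Γ (a.imp b) := mp (a1 b a) h

theorem imp_self (a : Fm) : Deriv Γ (a.imp a) :=
  mp (mp (a2 a (a.imp a) a) (a1 a (a.imp a))) (a1 a a)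

theorem imp_intro (h : Deriv (insert a Γ) b) : Deriv Γ (a.imp b) := by
  induction h with
  | hyp h =>
    rcases h with rfl | h
    · exact imp_self _
    · exact imp_of (hyp h)
  | a1 => exact imp_of (a1 ..)
  | a2 => exact imp_of (a2 ..)
  | a3 => exact imp_of (a3 ..)
  | a4 => exact imp_of (a4 ..)
  | a5 => exact imp_of (a5 ..)
  | a6 => exact imp_of (a6 ..)
  | a7 => exact imp_of (a7 ..)
  | a8 => exact imp_of (a8 ..)
  | a9 => exact imp_of (a9 ..)
  | a10 => exact imp_of (a10 ..)
  | mp _ _ ihab iha => exact mp (mp (a2 ..) ihab) iha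

theorem imp_trans (hab : Deriv Γ (a.imp b)) (hbc : Deriv Γ (b.imp c)) : Deriv Γ (a.imp c) :=
  mp (mp (a2 a b c) (imp_of hbc)) hab

theorem imp_and (hca : Deriv Γ (c.imp a)) (hcb : Deriv Γ (c.imp b)) :
    Deriv Γ (c.imp (a.and b)) :=
  mp (mp (a2 ..) (imp_trans hca (a5 a b))) hcb

theorem or_imp (hac : Deriv Γ (a.imp c)) (hbc : Deriv Γ (b.imp c)) :
    Deriv Γ ((a.or b).imp c) :=
  mp (mp (a8 a b c) hac) hbc

theorem imp_imp_iff_and_imp : Deriv Γ (a.imp (b.imp c)) ↔ Deriv Γ ((a.and b).imp c) :=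
  ⟨fun h => mp (mp (a2 ..) (imp_trans (a3 a b) h)) (a4 a b),
    fun h => imp_trans (a5 a b) (mp (a2 ..) (imp_of h))⟩

theorem imp_imp_imp (ha : Deriv Γ (a'.imp a)) (hb : Deriv Γ (b.imp b')) :
    Deriv Γ ((a.imp b).imp (a'.imp b')) := by
  refine imp_intro (imp_intro ?_)
  have hweaken {d : Fm} : Deriv Γ d → Deriv (insert a' (insert (a.imp b) Γ)) d :=
    mono ((Set.subset_insert _ _).trans (Set.subset_insert _ _))
  exact mp (hweaken hb) (mp (hyp (by simp)) (mp (hweaken ha) (hyp (by simp))))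

end Deriv

open Deriv in
def Lindenbaum.setoid (Γ : Set Fm) : Setoid Fm where
  r a b := Deriv Γ (a.imp b) ∧ Deriv Γ (b.imp a)
  iseqv := ⟨fun a => ⟨imp_self a, imp_self a⟩, fun h => h.symm,
    fun hab hbc => ⟨imp_trans hab.1 hbc.1, imp_trans hbc.2 hab.2⟩⟩

def Lindenbaum (Γ : Set Fm) : Type := Quotient (Lindenbaum.setoid Γ)

namespace Lindenbaum

open Deriv

variable {Γ : Set Fm}

def mk (a : Fm) : Lindenbaum Γ := Quotient.mk _ a

theorem mk_surjective : Function.Surjective (mk : Fm → Lindenbaum Γ) := Quotient.mk_surjective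

instance : LE (Lindenbaum Γ) where
  le := Quotient.lift₂ (fun a b => Deriv Γ (a.imp b)) fun _ _ _ _ ha hb =>
    propext ⟨fun h => imp_trans (imp_trans ha.2 h) hb.1, fun h => imp_trans (imp_trans ha.1 h) hb.2⟩

instance : Min (Lindenbaum Γ) where
  min := Quotient.map₂ Fm.and fun a a' ha b b' hb =>
    ⟨imp_and (imp_trans (a3 a b) ha.1) (imp_trans (a4 a b) hb.1),
      imp_and (imp_trans (a3 a' b') ha.2) (imp_trans (a4 a' b') hb.2)⟩

instance : Max (Lindenbaum Γ) where
  max := Quotient.map₂ Fm.or fun a a' ha b b' hb =>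
    ⟨or_imp (imp_trans ha.1 (a6 a' b')) (imp_trans hb.1 (a7 a' b')),
      or_imp (imp_trans ha.2 (a6 a b)) (imp_trans hb.2 (a7 a b))⟩

instance : HImp (Lindenbaum Γ) where
  himp := Quotient.map₂ Fm.imp fun _ _ ha _ _ hb =>
    ⟨imp_imp_imp ha.2 hb.1, imp_imp_imp ha.1 hb.2⟩

instance : Top (Lindenbaum Γ) where
  top := mk ((Fm.var 0).imp (Fm.var 0))

instance : GeneralizedHeytingAlgebra (Lindenbaum Γ) where
  sup := max
  inf := min
  le_refl x := Quotient.inductionOn x imp_self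
  le_trans x y z := Quotient.inductionOn₃ x y z fun _ _ _ => imp_trans
  le_antisymm x y := Quotient.inductionOn₂ x y fun _ _ hab hba => Quotient.sound ⟨hab, hba⟩
  inf_le_left x y := Quotient.inductionOn₂ x y a3
  inf_le_right x y := Quotient.inductionOn₂ x y a4
  le_inf x y z := Quotient.inductionOn₃ x y z fun _ _ _ => Deriv.imp_and
  le_sup_left x y := Quotient.inductionOn₂ x y a6
  le_sup_right x y := Quotient.inductionOn₂ x y a7
  sup_le x y z := Quotient.inductionOn₃ x y z fun _ _ _ => Deriv.or_imp
  le_top x := Quotient.inductionOn x fun _ => imp_of (imp_self _)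
  le_himp_iff x y z := Quotient.inductionOn₃ x y z fun _ _ _ => imp_imp_iff_and_imp

theorem mk_le_mk {a b : Fm} : (mk a : Lindenbaum Γ) ≤ mk b ↔ Deriv Γ (a.imp b) := Iff.rfl

theorem mk_eq_top_iff {a : Fm} : (mk a : Lindenbaum Γ) = ⊤ ↔ Deriv Γ a := by
  rw [← top_le_iff]
  exact ⟨fun h => mp h (imp_self _), imp_of⟩

theorem exists_isVal_up_mk (Γ : Set Fm) :
    ∃ F : FidelStr (ULift.{u} (Lindenbaum Γ)), IsVal F fun a => ULift.up (mk a) :=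
  ⟨_, isVal_ofSurjective (ULift.up_surjective.comp mk_surjective)
    (fun a => congrArg ULift.up (mk_eq_top_iff.2 (.a9 a))) (fun a => mk_le_mk.2 (.a10 a))
    (fun _ _ => rfl) (fun _ _ => rfl) (fun _ _ => rfl)⟩

end Lindenbaum

/-- Adequacy theorem for `C_ω` with respect to Fidel semantics: `Γ ⊢ α` in
`C_ω` if and only if, for every `C_ω`-structure `⟨A, N⟩` and every
`C_ω`-valuation `v` on it with `v(β) = 1` for all `β ∈ Γ`, one has `v(α) = 1`. -/
theorem comega_adequacy (Γ : Set Fm) (α : Fm) :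
    Deriv Γ α ↔
      ∀ (A : Type u) [GeneralizedHeytingAlgebra A] (F : FidelStr A) (v : Fm → A),
        IsVal F v → (∀ β ∈ Γ, v β = ⊤) → v α = ⊤ := by
  refine ⟨fun h _ _ _ _ hv hΓ => hv.eq_top_of_deriv hΓ h, fun h => ?_⟩
  obtain ⟨F, hF⟩ := Lindenbaum.exists_isVal_up_mk.{u} Γ
  have hΓ (β : Fm) (hβ : β ∈ Γ) : ULift.up (Lindenbaum.mk β) = ⊤ :=
    congrArg ULift.up (Lindenbaum.mk_eq_top_iff.2 (.hyp hβ))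
  exact Lindenbaum.mk_eq_top_iff.1 (congrArg ULift.down (h _ F _ hF hΓ))
end

section
/- In the name universe over any complete Heyting algebra A, the name-valued equality is an A-valued equivalence: for all A-names u, v, w one has ‖u ≈ u‖ = 1, ‖u ≈ v‖ = ‖v ≈ u‖, and ‖u ≈ v‖ ⊓ ‖v ≈ w‖ ≤ ‖u ≈ w‖. -/
universe u

namespace Ordinal

/-- Natural addition of ordinals (as in the older Mathlib, where it was `Ordinal.nadd`). -/
noncomputable def nadd (a b : Ordinal.{u}) : Ordinal.{u} :=
  max (blsub.{u, u} a fun a' _ => nadd a' b) (blsub.{u, u} b fun b' _ => nadd a b')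
termination_by (a, b)
decreasing_by
  · exact Prod.Lex.left _ _ (by assumption)
  · exact Prod.Lex.right _ (by assumption)

infixl:65 " ♯ " => Ordinal.nadd

theorem nadd_def (a b : Ordinal.{u}) :
    a ♯ b = max (blsub.{u, u} a fun a' _ => a' ♯ b) (blsub.{u, u} b fun b' _ => a ♯ b') := by
  rw [nadd]

theorem nadd_lt_nadd_left {b c : Ordinal.{u}} (h : b < c) (a : Ordinal.{u}) : a ♯ b < a ♯ c := by
  rw [nadd_def a c]
  exact lt_of_lt_of_le (lt_blsub.{u, u} (fun b' _ => a ♯ b') b h) (le_max_right _ _)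

theorem nadd_comm (a b : Ordinal.{u}) : a ♯ b = b ♯ a := by
  rw [nadd_def, nadd_def, max_comm]
  congr 1
  · congr 1; funext b' h; exact nadd_comm a b'
  · congr 1; funext a' h; exact nadd_comm a' b
termination_by (a, b)
decreasing_by
  · exact Prod.Lex.right _ (by assumption)
  · exact Prod.Lex.left _ _ (by assumption)

theorem nadd_le_nadd_left {b c : Ordinal.{u}} (h : b ≤ c) (a : Ordinal.{u}) : a ♯ b ≤ a ♯ c := by
  rcases lt_or_eq_of_le h with (h | rfl)
  · exact (nadd_lt_nadd_left h a).le
  · exact le_rfl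

theorem nadd_le_nadd_right {b c : Ordinal.{u}} (h : b ≤ c) (a : Ordinal.{u}) : b ♯ a ≤ c ♯ a := by
  rw [nadd_comm b a, nadd_comm c a]
  exact nadd_le_nadd_left h a

end Ordinal

/-- The universe `V^A` of `A`-names over a complete Heyting algebra `A`:
an `A`-name is a function from a set (of previously constructed `A`-names)
into `A`, here encoded by an indexing type `ι`, a family `elts` of names and
the family `val` of their attached truth values. -/
inductive HName (A : Type u) : Type (u + 1) where
  | mk (ι : Type u) (elts : ι → HName A) (val : ι → A)

namespace HName

variable {A : Type u}

/-- The indexing type of (the domain of) a name. -/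
def ι : HName A → Type u
  | mk ι _ _ => ι

/-- The members of (the domain of) a name. -/
def elts : (u : HName A) → u.ι → HName A
  | mk _ e _ => e

/-- The values attached by a name to the members of its domain. -/
def val : (u : HName A) → u.ι → A
  | mk _ _ v => v

/-- Ordinal rank of a name (used for the recursive definition of truth values). -/
noncomputable def rank : HName A → Ordinal.{u}
  | mk _ e _ => Ordinal.lsub fun i => (e i).rank

theorem rank_lt {ι : Type u} (e : ι → HName A) (v : ι → A) (i : ι) :
    (e i).rank < (mk ι e v).rank := Ordinal.lt_lsub _ i

variable [Order.Frame A]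

/-- The truth value `‖u ≈ v‖` of equality of two names, defined by the recursion
`‖u ≈ v‖ = ⨅_{x ∈ dom u} (u(x) ⇨ ‖x ∈ v‖) ⊓ ⨅_{y ∈ dom v} (v(y) ⇨ ‖y ∈ u‖)`,
where `‖x ∈ v‖ = ⨆_{y ∈ dom v} (v(y) ⊓ ‖y ≈ x‖)` is inlined. -/
noncomputable def eqVal : HName A → HName A → A
  | mk ι e a, mk κ f b =>
      (⨅ i, a i ⇨ ⨆ j, b j ⊓ eqVal (f j) (e i)) ⊓
      (⨅ j, b j ⇨ ⨆ i, a i ⊓ eqVal (e i) (f j))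
termination_by u v => u.rank ♯ v.rank
decreasing_by
  · calc rank (f j) ♯ rank (e i) < rank (f j) ♯ rank (mk ι e a) :=
          Ordinal.nadd_lt_nadd_left (rank_lt e a i) _
      _ ≤ rank (mk κ f b) ♯ rank (mk ι e a) :=
          Ordinal.nadd_le_nadd_right (le_of_lt (rank_lt f b j)) _
      _ = rank (mk ι e a) ♯ rank (mk κ f b) := Ordinal.nadd_comm _ _
  · calc rank (e i) ♯ rank (f j) < rank (e i) ♯ rank (mk κ f b) :=
          Ordinal.nadd_lt_nadd_left (rank_lt f b j) _
      _ ≤ rank (mk ι e a) ♯ rank (mk κ f b) :=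
          Ordinal.nadd_le_nadd_right (le_of_lt (rank_lt e a i)) _

/-- The truth value `‖u ∈ v‖ = ⨆_{x ∈ dom v} (v(x) ⊓ ‖x ≈ u‖)` of membership. -/
noncomputable def memVal (u v : HName A) : A :=
  ⨆ j : v.ι, v.val j ⊓ eqVal (v.elts j) u

end HName

/-!
Symmetry is read off the defining equation, and `‖u ≈ u‖ = 1` follows by induction since every
`x ∈ dom u` witnesses `‖x ∈ u‖ ≥ u(x)`. For transitivity, induct on `u` for all `v`, `w` at once:
an element `x ∈ dom u` lies in `v` to degree `‖u ≈ v‖`, through some `y ∈ dom v`, and that `y` lies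
in `w` to degree `‖v ≈ w‖`, through some `z ∈ dom w`; transitivity for the triple `x, y, z` of
smaller names gives `‖x ∈ w‖`. Elements of `dom w` are pulled back to `u` the same way.
-/

namespace HName

variable {A : Type u} [Order.Frame A]

theorem eqVal_def (u v : HName A) :
    eqVal u v = (⨅ i, u.val i ⇨ memVal (u.elts i) v) ⊓ (⨅ j, v.val j ⇨ memVal (v.elts j) u) := by
  cases u; cases v; rw [eqVal]; rfl

theorem eqVal_comm (u v : HName A) : eqVal u v = eqVal v u := by
  rw [eqVal_def, eqVal_def v, inf_comm]

theorem val_inf_eqVal_le_memVal (u v : HName A) (i : u.ι) :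
    u.val i ⊓ eqVal u v ≤ memVal (u.elts i) v := by
  rw [inf_comm]
  refine le_himp_iff.1 ?_
  rw [eqVal_def]
  exact inf_le_left.trans (iInf_le (fun i => u.val i ⇨ memVal (u.elts i) v) i)

theorem eqVal_self (u : HName A) : eqVal u u = ⊤ := by
  induction u with
  | mk ι e a ih =>
    have hmem : ∀ i, a i ≤ memVal (e i) (mk ι e a) := fun i =>
      le_iSup_of_le i (by simp only [val, elts, ih i, inf_top_eq, le_refl])
    rw [eqVal_def]
    simp only [inf_eq_top_iff, iInf_eq_top, himp_eq_top_iff]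
    exact ⟨hmem, hmem⟩

theorem memVal_inf_eqVal_le {t v w : HName A}
    (htrans : ∀ j k, eqVal (w.elts k) (v.elts j) ⊓ eqVal (v.elts j) t ≤ eqVal (w.elts k) t) :
    memVal t v ⊓ eqVal v w ≤ memVal t w := by
  rw [memVal, iSup_inf_eq]
  refine iSup_le fun j => ?_
  calc v.val j ⊓ eqVal (v.elts j) t ⊓ eqVal v w
      = v.val j ⊓ eqVal v w ⊓ eqVal (v.elts j) t := inf_right_comm _ _ _
    _ ≤ memVal (v.elts j) w ⊓ eqVal (v.elts j) t :=
        inf_le_inf_right _ (val_inf_eqVal_le_memVal v w j)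
    _ ≤ memVal t w := by
        rw [memVal, iSup_inf_eq]
        refine iSup_le fun k => le_iSup_of_le k ?_
        rw [inf_assoc]
        exact inf_le_inf_left _ (htrans j k)

theorem eqVal_trans (u v w : HName A) : eqVal u v ⊓ eqVal v w ≤ eqVal u w := by
  induction u generalizing v w with
  | mk ι e a ih =>
    set u := mk ι e a
    have ih_rev : ∀ i (v w : HName A), eqVal w v ⊓ eqVal v (e i) ≤ eqVal w (e i) := by
      intro i v w
      rw [eqVal_comm w v, eqVal_comm v (e i), eqVal_comm w (e i), inf_comm]
      exact ih i v w
    rw [eqVal_def u w]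
    refine le_inf (le_iInf fun i => le_himp_iff.2 ?_) (le_iInf fun k => le_himp_iff.2 ?_)
    · calc eqVal u v ⊓ eqVal v w ⊓ a i
          = a i ⊓ eqVal u v ⊓ eqVal v w := by rw [inf_comm, inf_assoc]
        _ ≤ memVal (e i) v ⊓ eqVal v w :=
            inf_le_inf_right _ (val_inf_eqVal_le_memVal u v i)
        _ ≤ memVal (e i) w := memVal_inf_eqVal_le fun j k => ih_rev i _ _
    · calc eqVal u v ⊓ eqVal v w ⊓ w.val k
          = w.val k ⊓ eqVal w v ⊓ eqVal v u := by
            rw [eqVal_comm u v, eqVal_comm v w]; ac_rfl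
        _ ≤ memVal (w.elts k) v ⊓ eqVal v u :=
            inf_le_inf_right _ (val_inf_eqVal_le_memVal w v k)
        _ ≤ memVal (w.elts k) u := memVal_inf_eqVal_le fun j i => ih i _ _

end HName

open HName in
/-- In the name universe over any complete Heyting algebra `A`, the name-valued
equality is an `A`-valued equivalence: for all `A`-names `u`, `v`, `w`,
`‖u ≈ u‖ = 1`, `‖u ≈ v‖ = ‖v ≈ u‖` and `‖u ≈ v‖ ⊓ ‖v ≈ w‖ ≤ ‖u ≈ w‖`. -/
theorem eqVal_refl_symm_trans {A : Type u} [Order.Frame A] (u v w : HName A) :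
    eqVal u u = ⊤ ∧ eqVal u v = eqVal v u ∧ eqVal u v ⊓ eqVal v w ≤ eqVal u w :=
  ⟨eqVal_self u, eqVal_comm u v, eqVal_trans u v w⟩
end
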